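/- Continuity of composition in TL²: Let μ_n, μ be Borel probability measures on ℝ^d with finite second moments, F_n ∈ L²(μ_n; ℝ^k), F ∈ L²(μ; ℝ^k), and set μ̃_n = (F_n)_♯ μ_n, μ̃ = F_♯ μ. Let f̃_n ∈ L²(μ̃_n), f̃ ∈ L²(μ̃). If (μ_n, F_n) → (μ, F) in TL² and (μ̃_n, f̃_n) → (μ̃, f̃) in TL², then (μ_n, f̃_n ∘ F_n) → (μ, f̃ ∘ F) in TL². -/

import Mathlib

open MeasureTheory Filter

/-- The `TL²` distance between `(μ, f)` and `(θ, g)` for functions with values in a metric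
space `F`. -/
noncomputable def dTL2 {d : ℕ} {F : Type*} [PseudoMetricSpace F]
    (μ θ : Measure (EuclideanSpace ℝ (Fin d)))
    (f g : EuclideanSpace ℝ (Fin d) → F) : ℝ :=
  sInf { r : ℝ | ∃ π : Measure (EuclideanSpace ℝ (Fin d) × EuclideanSpace ℝ (Fin d)),
      π.fst = μ ∧ π.snd = θ ∧
      r = Real.sqrt (∫ p, dist p.1 p.2 ^ 2 + dist (f p.1) (g p.2) ^ 2 ∂π) }

/-- The `TL²` distance for pairs of measures on `ℝ^k` with real-valued functions. -/
noncomputable def dTL2' {k : ℕ} (μ θ : Measure (EuclideanSpace ℝ (Fin k)))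
    (f g : EuclideanSpace ℝ (Fin k) → ℝ) : ℝ :=
  sInf { r : ℝ | ∃ π : Measure (EuclideanSpace ℝ (Fin k) × EuclideanSpace ℝ (Fin k)),
      π.fst = μ ∧ π.snd = θ ∧
      r = Real.sqrt (∫ p, dist p.1 p.2 ^ 2 + dist (f p.1) (g p.2) ^ 2 ∂π) }

/-! Approximate `f̃` in `L²(F_♯μ)` by a continuous compactly supported `g`: being bounded and
uniformly continuous, `g` satisfies `‖g a - g b‖² ≤ ε² + K ‖a - b‖²`. Pushing an almost optimal
coupling of `μ_n` and `μ` forward by `F_n × F` gives a coupling `ρ` of `F_{n♯}μ_n` and `F_♯μ`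
with small displacement; let `γ` be an almost optimal coupling for `(F_{n♯}μ_n, f̃_n)` and
`(F_♯μ, f̃)`. Split `f̃_n a - f̃ b = (f̃_n a - g a) + (g a - g b) + (g b - f̃ b)` along `ρ`: the
first term depends only on the first marginal, so it may be integrated along `γ` instead, where
it is small by the same splitting; the other two are controlled by the oscillation bound and by
`‖f̃ - g‖`. -/

section Coupling

variable {X Y E : Type*} [MeasurableSpace X] [MeasurableSpace Y] [NormedAddCommGroup E]
  {π : Measure (X × Y)} {μ : Measure X} {ν : Measure Y}

lemma isProbabilityMeasure_of_fst_eq [IsProbabilityMeasure μ] (hπ : π.fst = μ) :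
    IsProbabilityMeasure π :=
  ⟨by rw [← Measure.fst_univ, hπ, measure_univ]⟩

lemma MeasureTheory.MemLp.comp_fst_of_fst_eq {p : ENNReal} {f : X → E} (hπ : π.fst = μ)
    (hf : MemLp f p μ) : MemLp (fun z => f z.1) p π := by
  rw [← hπ] at hf
  exact hf.comp_of_map measurable_fst.aemeasurable

lemma MeasureTheory.MemLp.comp_snd_of_snd_eq {p : ENNReal} {f : Y → E} (hπ : π.snd = ν)
    (hf : MemLp f p ν) : MemLp (fun z => f z.2) p π := by
  rw [← hπ] at hf
  exact hf.comp_of_map measurable_snd.aemeasurable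

lemma integral_comp_fst_of_fst_eq [NormedSpace ℝ E] {f : X → E} (hπ : π.fst = μ)
    (hf : AEStronglyMeasurable f μ) : ∫ z, f z.1 ∂π = ∫ x, f x ∂μ := by
  rw [← hπ] at hf ⊢
  exact (integral_map measurable_fst.aemeasurable hf).symm

lemma integral_comp_snd_of_snd_eq [NormedSpace ℝ E] {f : Y → E} (hπ : π.snd = ν)
    (hf : AEStronglyMeasurable f ν) : ∫ z, f z.2 ∂π = ∫ y, f y ∂ν := by
  rw [← hπ] at hf ⊢
  exact (integral_map measurable_snd.aemeasurable hf).symm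

lemma integrable_dist_sq {Z : Type*} [MeasurableSpace Z] {ρ : Measure Z} {u v : Z → E}
    (hu : MemLp u 2 ρ) (hv : MemLp v 2 ρ) : Integrable (fun z => dist (u z) (v z) ^ 2) ρ := by
  simpa [dist_eq_norm] using (hu.sub hv).integrable_norm_pow two_ne_zero

lemma integrable_dist_sq_of_coupling (hπ₁ : π.fst = μ) (hπ₂ : π.snd = ν) {u : X → E}
    {v : Y → E} (hu : MemLp u 2 μ) (hv : MemLp v 2 ν) :
    Integrable (fun z => dist (u z.1) (v z.2) ^ 2) π :=
  integrable_dist_sq (hu.comp_fst_of_fst_eq hπ₁) (hv.comp_snd_of_snd_eq hπ₂)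

lemma integrable_dist_sq_fst_snd [MeasurableSpace E] {π : Measure (E × E)} {μ ν : Measure E}
    (hπ₁ : π.fst = μ) (hπ₂ : π.snd = ν) (hμ : MemLp id 2 μ) (hν : MemLp id 2 ν) :
    Integrable (fun z => dist z.1 z.2 ^ 2) π :=
  integrable_dist_sq_of_coupling hπ₁ hπ₂ hμ hν

lemma MeasureTheory.Measure.fst_map_prodMap {X' Y' : Type*} [MeasurableSpace X']
    [MeasurableSpace Y'] {f : X → X'} {g : Y → Y'} (hf : Measurable f) (hg : Measurable g) :
    (π.map (Prod.map f g)).fst = π.fst.map f := by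
  rw [Measure.fst, Measure.fst, Measure.map_map measurable_fst (hf.prodMap hg),
    Measure.map_map hf measurable_fst]
  rfl

lemma MeasureTheory.Measure.snd_map_prodMap {X' Y' : Type*} [MeasurableSpace X']
    [MeasurableSpace Y'] {f : X → X'} {g : Y → Y'} (hf : Measurable f) (hg : Measurable g) :
    (π.map (Prod.map f g)).snd = π.snd.map g := by
  rw [Measure.snd, Measure.snd, Measure.map_map measurable_snd (hf.prodMap hg),
    Measure.map_map hg measurable_snd]
  rfl

end Coupling

lemma dist_sq_le_three_mul {E : Type*} [PseudoMetricSpace E] (a b c e : E) :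
    dist a e ^ 2 ≤ 3 * (dist a b ^ 2 + dist b c ^ 2 + dist c e ^ 2) := by
  have h := dist_triangle4 a b c e
  have := dist_nonneg (x := a) (y := e)
  nlinarith [sq_nonneg (dist a b - dist b c), sq_nonneg (dist b c - dist c e),
    sq_nonneg (dist a b - dist c e)]

lemma integral_dist_sq_le_three_mul {Z E : Type*} [MeasurableSpace Z] [PseudoMetricSpace E]
    {ρ : Measure Z} {a b c e : Z → E}
    (hab : Integrable (fun z => dist (a z) (b z) ^ 2) ρ)
    (hbc : Integrable (fun z => dist (b z) (c z) ^ 2) ρ)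
    (hce : Integrable (fun z => dist (c z) (e z) ^ 2) ρ) :
    ∫ z, dist (a z) (e z) ^ 2 ∂ρ ≤ 3 * (∫ z, dist (a z) (b z) ^ 2 ∂ρ
      + ∫ z, dist (b z) (c z) ^ 2 ∂ρ + ∫ z, dist (c z) (e z) ^ 2 ∂ρ) := by
  have h12 : Integrable (fun z => dist (a z) (b z) ^ 2 + dist (b z) (c z) ^ 2) ρ := hab.add hbc
  calc ∫ z, dist (a z) (e z) ^ 2 ∂ρ
      ≤ ∫ z, 3 * (dist (a z) (b z) ^ 2 + dist (b z) (c z) ^ 2 + dist (c z) (e z) ^ 2) ∂ρ :=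
        integral_mono_of_nonneg (ae_of_all _ fun z => by positivity) ((h12.add hce).const_mul 3)
          (ae_of_all _ fun z => dist_sq_le_three_mul _ _ _ _)
    _ = _ := by rw [integral_const_mul, integral_add h12 hce, integral_add hab hbc]

lemma UniformContinuous.exists_dist_sq_le {E G : Type*} [PseudoMetricSpace E]
    [PseudoMetricSpace G] {g : E → G} (hg : UniformContinuous g)
    (hb : Bornology.IsBounded (Set.range g)) {ε : ℝ} (hε : 0 < ε) :
    ∃ K, 0 ≤ K ∧ ∀ a b, dist (g a) (g b) ^ 2 ≤ ε ^ 2 + K * dist a b ^ 2 := by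
  obtain ⟨C, hC⟩ := Metric.isBounded_range_iff.1 hb
  obtain ⟨δ, hδ, hgδ⟩ := Metric.uniformContinuous_iff.1 hg ε hε
  refine ⟨(C / δ) ^ 2, sq_nonneg _, fun a b => ?_⟩
  rcases lt_or_ge (dist a b) δ with hab | hab
  · have : dist (g a) (g b) ^ 2 ≤ ε ^ 2 := pow_le_pow_left₀ dist_nonneg (hgδ hab).le 2
    nlinarith [sq_nonneg (C / δ), sq_nonneg (dist a b)]
  · have hC0 : 0 ≤ C := dist_nonneg.trans (hC a b)
    have : dist (g a) (g b) ≤ C / δ * dist a b := by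
      calc dist (g a) (g b) ≤ C := hC a b
        _ = C / δ * δ := by field_simp
        _ ≤ C / δ * dist a b := by gcongr
    have := pow_le_pow_left₀ dist_nonneg this 2
    nlinarith [sq_nonneg ε]

lemma integral_dist_comp_sq_le {E G : Type*} [PseudoMetricSpace E] [MeasurableSpace E]
    [PseudoMetricSpace G] {g : E → G} {ε K : ℝ}
    (hosc : ∀ a b, dist (g a) (g b) ^ 2 ≤ ε ^ 2 + K * dist a b ^ 2)
    {ρ : Measure (E × E)} [IsProbabilityMeasure ρ]
    (hρ : Integrable (fun z => dist z.1 z.2 ^ 2) ρ) :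
    ∫ z, dist (g z.1) (g z.2) ^ 2 ∂ρ ≤ ε ^ 2 + K * ∫ z, dist z.1 z.2 ^ 2 ∂ρ := by
  calc ∫ z, dist (g z.1) (g z.2) ^ 2 ∂ρ ≤ ∫ z, ε ^ 2 + K * dist z.1 z.2 ^ 2 ∂ρ :=
        integral_mono_of_nonneg (ae_of_all _ fun z => by positivity)
          ((integrable_const _).add (hρ.const_mul K)) (ae_of_all _ fun z => hosc _ _)
    _ = ε ^ 2 + K * ∫ z, dist z.1 z.2 ^ 2 ∂ρ := by
        rw [integral_add (integrable_const _) (hρ.const_mul K), integral_const_mul]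
        simp

lemma integral_dist_sq_le_of_couplings {E G : Type*} [PseudoMetricSpace E] [MeasurableSpace E]
    [NormedAddCommGroup G] {ν₁ ν₂ : Measure E} {ρ γ : Measure (E × E)} [IsProbabilityMeasure ρ]
    [IsProbabilityMeasure γ] {f₁ f₂ g : E → G} {ε K η : ℝ} (hρ₁ : ρ.fst = ν₁) (hρ₂ : ρ.snd = ν₂)
    (hγ₁ : γ.fst = ν₁) (hγ₂ : γ.snd = ν₂)
    (hρi : Integrable (fun z => dist z.1 z.2 ^ 2) ρ)
    (hγi : Integrable (fun z => dist z.1 z.2 ^ 2) γ)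
    (hf₁ : MemLp f₁ 2 ν₁) (hf₂ : MemLp f₂ 2 ν₂) (hg₁ : MemLp g 2 ν₁) (hg₂ : MemLp g 2 ν₂)
    (hK : 0 ≤ K) (hosc : ∀ a b, dist (g a) (g b) ^ 2 ≤ ε ^ 2 + K * dist a b ^ 2)
    (hfg : ∫ x, dist (f₂ x) (g x) ^ 2 ∂ν₂ ≤ ε ^ 2)
    (hρ : ∫ z, dist z.1 z.2 ^ 2 ∂ρ ≤ η) (hγ : ∫ z, dist z.1 z.2 ^ 2 ∂γ ≤ η)
    (hγf : ∫ z, dist (f₁ z.1) (f₂ z.2) ^ 2 ∂γ ≤ η) :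
    ∫ z, dist (f₁ z.1) (f₂ z.2) ^ 2 ∂ρ ≤ 9 * η + 12 * K * η + 24 * ε ^ 2 := by
  have hf₁g := integrable_dist_sq hf₁ hg₁
  have hf₂g := integrable_dist_sq hf₂ hg₂
  have hoscρ : ∫ z, dist (g z.1) (g z.2) ^ 2 ∂ρ ≤ ε ^ 2 + K * η :=
    (integral_dist_comp_sq_le hosc hρi).trans (by gcongr)
  have hoscγ : ∫ z, dist (g z.2) (g z.1) ^ 2 ∂γ ≤ ε ^ 2 + K * η := by
    simp only [dist_comm]
    exact (integral_dist_comp_sq_le hosc hγi).trans (by gcongr)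
  have hf₂gγ : ∫ z, dist (f₂ z.2) (g z.2) ^ 2 ∂γ ≤ ε ^ 2 := by
    rwa [integral_comp_snd_of_snd_eq hγ₂ hf₂g.aestronglyMeasurable]
  have hgf₂ρ : ∫ z, dist (g z.2) (f₂ z.2) ^ 2 ∂ρ ≤ ε ^ 2 := by
    rw [integral_comp_snd_of_snd_eq hρ₂ (integrable_dist_sq hg₂ hf₂).aestronglyMeasurable]
    simpa only [dist_comm] using hfg
  -- `ρ` and `γ` share the first marginal, so `‖f₁ - g‖²` can be measured along `γ`.
  have hf₁gρ : ∫ z, dist (f₁ z.1) (g z.1) ^ 2 ∂ρ ≤ 3 * (η + ε ^ 2 + (ε ^ 2 + K * η)) := by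
    rw [integral_comp_fst_of_fst_eq hρ₁ hf₁g.aestronglyMeasurable,
      ← integral_comp_fst_of_fst_eq hγ₁ hf₁g.aestronglyMeasurable]
    calc ∫ z, dist (f₁ z.1) (g z.1) ^ 2 ∂γ
        ≤ 3 * (∫ z, dist (f₁ z.1) (f₂ z.2) ^ 2 ∂γ + ∫ z, dist (f₂ z.2) (g z.2) ^ 2 ∂γ
          + ∫ z, dist (g z.2) (g z.1) ^ 2 ∂γ) :=
          integral_dist_sq_le_three_mul (integrable_dist_sq_of_coupling hγ₁ hγ₂ hf₁ hf₂)
            (integrable_dist_sq (hf₂.comp_snd_of_snd_eq hγ₂) (hg₂.comp_snd_of_snd_eq hγ₂))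
            (integrable_dist_sq (hg₂.comp_snd_of_snd_eq hγ₂) (hg₁.comp_fst_of_fst_eq hγ₁))
      _ ≤ 3 * (η + ε ^ 2 + (ε ^ 2 + K * η)) := by gcongr
  calc ∫ z, dist (f₁ z.1) (f₂ z.2) ^ 2 ∂ρ
      ≤ 3 * (∫ z, dist (f₁ z.1) (g z.1) ^ 2 ∂ρ + ∫ z, dist (g z.1) (g z.2) ^ 2 ∂ρ
        + ∫ z, dist (g z.2) (f₂ z.2) ^ 2 ∂ρ) :=
        integral_dist_sq_le_three_mul (integrable_dist_sq (hf₁.comp_fst_of_fst_eq hρ₁)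
          (hg₁.comp_fst_of_fst_eq hρ₁)) (integrable_dist_sq_of_coupling hρ₁ hρ₂ hg₁ hg₂)
          (integrable_dist_sq (hg₂.comp_snd_of_snd_eq hρ₂) (hf₂.comp_snd_of_snd_eq hρ₂))
    _ ≤ 9 * η + 12 * K * η + 24 * ε ^ 2 := by linarith

lemma integral_lt_and_integral_lt_of_integral_add_lt {Z : Type*} [MeasurableSpace Z]
    {ρ : Measure Z} {u v : Z → ℝ} (hu : Integrable u ρ) (hv : Integrable v ρ) (hu0 : 0 ≤ u)
    (hv0 : 0 ≤ v) {c : ℝ} (h : ∫ z, u z + v z ∂ρ < c) :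
    ∫ z, u z ∂ρ < c ∧ ∫ z, v z ∂ρ < c := by
  rw [integral_add hu hv] at h
  exact ⟨by linarith [integral_nonneg (μ := ρ) hv0], by linarith [integral_nonneg (μ := ρ) hu0]⟩

section TL2

variable {d : ℕ} {F : Type*} [PseudoMetricSpace F] {μ θ : Measure (EuclideanSpace ℝ (Fin d))}
  {f g : EuclideanSpace ℝ (Fin d) → F}

lemma dTL2_nonneg : 0 ≤ dTL2 μ θ f g :=
  Real.sInf_nonneg fun _ ⟨_, _, _, hr⟩ => hr ▸ Real.sqrt_nonneg _

lemma dTL2_le_sqrt_integral {π : Measure (EuclideanSpace ℝ (Fin d) × EuclideanSpace ℝ (Fin d))}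
    (hπ₁ : π.fst = μ) (hπ₂ : π.snd = θ) :
    dTL2 μ θ f g ≤ Real.sqrt (∫ z, dist z.1 z.2 ^ 2 + dist (f z.1) (g z.2) ^ 2 ∂π) :=
  csInf_le ⟨0, fun _ ⟨_, _, _, hr⟩ => hr ▸ Real.sqrt_nonneg _⟩ ⟨π, hπ₁, hπ₂, rfl⟩

lemma exists_coupling_of_dTL2_lt_sqrt [IsProbabilityMeasure μ] [IsProbabilityMeasure θ] {η : ℝ}
    (h : dTL2 μ θ f g < Real.sqrt η) :
    ∃ π : Measure (EuclideanSpace ℝ (Fin d) × EuclideanSpace ℝ (Fin d)),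
      IsProbabilityMeasure π ∧ π.fst = μ ∧ π.snd = θ ∧
      ∫ z, dist z.1 z.2 ^ 2 + dist (f z.1) (g z.2) ^ 2 ∂π < η := by
  obtain ⟨_, ⟨π, hπ₁, hπ₂, rfl⟩, hπ⟩ := exists_lt_of_csInf_lt
    (by exact ⟨_, μ.prod θ, Measure.fst_prod, Measure.snd_prod, rfl⟩) h
  exact ⟨π, isProbabilityMeasure_of_fst_eq hπ₁, hπ₁, hπ₂,
    (Real.sqrt_lt_sqrt_iff (integral_nonneg fun _ => by positivity)).1 hπ⟩

lemma exists_coupling_of_dTL2_lt_sqrt_of_memLp {G : Type*} [NormedAddCommGroup G]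
    [IsProbabilityMeasure μ] [IsProbabilityMeasure θ] {f g : EuclideanSpace ℝ (Fin d) → G}
    (hμ : MemLp id 2 μ) (hθ : MemLp id 2 θ) (hf : MemLp f 2 μ) (hg : MemLp g 2 θ) {η : ℝ}
    (h : dTL2 μ θ f g < Real.sqrt η) :
    ∃ π : Measure (EuclideanSpace ℝ (Fin d) × EuclideanSpace ℝ (Fin d)),
      IsProbabilityMeasure π ∧ π.fst = μ ∧ π.snd = θ ∧
      ∫ z, dist z.1 z.2 ^ 2 ∂π < η ∧ ∫ z, dist (f z.1) (g z.2) ^ 2 ∂π < η := by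
  obtain ⟨π, hπ, hπ₁, hπ₂, hcost⟩ := exists_coupling_of_dTL2_lt_sqrt h
  exact ⟨π, hπ, hπ₁, hπ₂, integral_lt_and_integral_lt_of_integral_add_lt
    (integrable_dist_sq_fst_snd hπ₁ hπ₂ hμ hθ) (integrable_dist_sq_of_coupling hπ₁ hπ₂ hf hg)
    (fun _ => by positivity) (fun _ => by positivity) hcost⟩

end TL2

lemma MeasureTheory.MemLp.exists_hasCompactSupport_integral_dist_sq_le {α E : Type*}
    [TopologicalSpace α] [NormalSpace α] [R1Space α] [WeaklyLocallyCompactSpace α]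
    [MeasurableSpace α] [BorelSpace α] {μ : Measure α} [μ.Regular]
    [NormedAddCommGroup E] [NormedSpace ℝ E] {f : α → E} (hf : MemLp f 2 μ) {ε : ℝ}
    (hε : 0 < ε) :
    ∃ g : α → E, HasCompactSupport g ∧ Continuous g ∧ ∫ x, dist (f x) (g x) ^ 2 ∂μ ≤ ε := by
  obtain ⟨g, hgc, hfg, hg, -⟩ := (show MemLp f (ENNReal.ofReal 2) μ by simpa using hf)
    |>.exists_hasCompactSupport_integral_rpow_sub_le two_pos hε
  exact ⟨g, hgc, hg, by simpa [dist_eq_norm, Real.rpow_two] using hfg⟩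

lemma dTL2_comp_le_of_dTL2_lt {d k : ℕ} {G : Type*} [NormedAddCommGroup G]
    {μ' μ : Measure (EuclideanSpace ℝ (Fin d))} [IsProbabilityMeasure μ'] [IsProbabilityMeasure μ]
    (h2' : MemLp id 2 μ') (h2 : MemLp id 2 μ)
    {F' F : EuclideanSpace ℝ (Fin d) → EuclideanSpace ℝ (Fin k)} (hF'm : Measurable F')
    (hFm : Measurable F) (hF' : MemLp F' 2 μ') (hF : MemLp F 2 μ)
    {f' f g : EuclideanSpace ℝ (Fin k) → G} (hf' : MemLp f' 2 (μ'.map F'))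
    (hf : MemLp f 2 (μ.map F)) (hg : Continuous g) (hgc : HasCompactSupport g) {ε K η : ℝ}
    (hK : 0 ≤ K) (hosc : ∀ a b, dist (g a) (g b) ^ 2 ≤ ε ^ 2 + K * dist a b ^ 2)
    (hfg : ∫ y, dist (f y) (g y) ^ 2 ∂(μ.map F) ≤ ε ^ 2)
    (hF'F : dTL2 μ' μ F' F < Real.sqrt η)
    (hf'f : dTL2 (μ'.map F') (μ.map F) f' f < Real.sqrt η) :
    dTL2 μ' μ (fun x => f' (F' x)) (fun x => f (F x))
      ≤ Real.sqrt (10 * η + 12 * K * η + 24 * ε ^ 2) := by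
  have := Measure.isProbabilityMeasure_map (μ := μ') hF'm.aemeasurable
  have := Measure.isProbabilityMeasure_map (μ := μ) hFm.aemeasurable
  have hm' : MemLp id 2 (μ'.map F') :=
    (memLp_map_measure_iff aestronglyMeasurable_id hF'm.aemeasurable).2 hF'
  have hm : MemLp id 2 (μ.map F) :=
    (memLp_map_measure_iff aestronglyMeasurable_id hFm.aemeasurable).2 hF
  obtain ⟨π, _, hπ₁, hπ₂, hπx, hπF⟩ := exists_coupling_of_dTL2_lt_sqrt_of_memLp h2' h2 hF' hF hF'F
  obtain ⟨γ, _, hγ₁, hγ₂, hγx, hγf⟩ := exists_coupling_of_dTL2_lt_sqrt_of_memLp hm' hm hf' hf hf'f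
  have hFF := (hF'm.prodMap hFm).aemeasurable (μ := π)
  generalize hρ : π.map (Prod.map F' F) = ρ
  have : IsProbabilityMeasure ρ := hρ ▸ Measure.isProbabilityMeasure_map hFF
  have hρ₁ : ρ.fst = μ'.map F' := by rw [← hρ, Measure.fst_map_prodMap hF'm hFm, hπ₁]
  have hρ₂ : ρ.snd = μ.map F := by rw [← hρ, Measure.snd_map_prodMap hF'm hFm, hπ₂]
  have hρi := integrable_dist_sq_fst_snd hρ₁ hρ₂ hm' hm
  have hρf : ∫ z, dist (f' z.1) (f z.2) ^ 2 ∂ρ = ∫ z, dist (f' (F' z.1)) (f (F z.2)) ^ 2 ∂π := by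
    rw [← hρ] at hρ₁ hρ₂ ⊢
    exact integral_map hFF (integrable_dist_sq_of_coupling hρ₁ hρ₂ hf' hf).aestronglyMeasurable
  have hρF : ∫ z, dist z.1 z.2 ^ 2 ∂ρ = ∫ z, dist (F' z.1) (F z.2) ^ 2 ∂π := by
    rw [← hρ] at hρi ⊢
    exact integral_map hFF hρi.aestronglyMeasurable
  have hρcost := integral_dist_sq_le_of_couplings hρ₁ hρ₂ hγ₁ hγ₂ hρi
    (integrable_dist_sq_fst_snd hγ₁ hγ₂ hm' hm) hf' hf
    (hg.memLp_of_hasCompactSupport hgc) (hg.memLp_of_hasCompactSupport hgc) hK hosc hfg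
    (hρF.trans_le hπF.le) hγx.le hγf.le
  calc dTL2 μ' μ (fun x => f' (F' x)) (fun x => f (F x))
      ≤ Real.sqrt (∫ z, dist z.1 z.2 ^ 2 + dist (f' (F' z.1)) (f (F z.2)) ^ 2 ∂π) :=
        dTL2_le_sqrt_integral hπ₁ hπ₂
    _ ≤ Real.sqrt (10 * η + 12 * K * η + 24 * ε ^ 2) := by
        refine Real.sqrt_le_sqrt ?_
        have hπf : Integrable (fun z => dist (f' (F' z.1)) (f (F z.2)) ^ 2) π :=
          integrable_dist_sq_of_coupling hπ₁ hπ₂ (hf'.comp_of_map hF'm.aemeasurable)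
            (hf.comp_of_map hFm.aemeasurable)
        rw [integral_add (integrable_dist_sq_fst_snd hπ₁ hπ₂ h2' h2) hπf]
        linarith

/-- Continuity of composition in `TL²`: if `(μ_n, F_n) → (μ, F)` in `TL²` and
`(F_{n♯}μ_n, f̃_n) → (F_♯μ, f̃)` in `TL²`, then `(μ_n, f̃_n ∘ F_n) → (μ, f̃ ∘ F)` in `TL²`. -/
theorem TL2_composition_continuous (d k : ℕ)
    (μ : Measure (EuclideanSpace ℝ (Fin d))) [IsProbabilityMeasure μ]
    (h2 : Integrable (fun x => ‖x‖ ^ 2) μ)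
    (μs : ℕ → Measure (EuclideanSpace ℝ (Fin d)))
    (hprob : ∀ n, IsProbabilityMeasure (μs n))
    (h2s : ∀ n, Integrable (fun x => ‖x‖ ^ 2) (μs n))
    (F : EuclideanSpace ℝ (Fin d) → EuclideanSpace ℝ (Fin k))
    (Fs : ℕ → EuclideanSpace ℝ (Fin d) → EuclideanSpace ℝ (Fin k))
    (hFm : Measurable F) (hFsm : ∀ n, Measurable (Fs n))
    (hF : MemLp F 2 μ) (hFs : ∀ n, MemLp (Fs n) 2 (μs n))
    (ft : EuclideanSpace ℝ (Fin k) → ℝ) (fts : ℕ → EuclideanSpace ℝ (Fin k) → ℝ)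
    (hft : MemLp ft 2 (Measure.map F μ))
    (hfts : ∀ n, MemLp (fts n) 2 (Measure.map (Fs n) (μs n)))
    (hFconv : Tendsto (fun n => dTL2 (μs n) μ (Fs n) F) atTop (nhds 0))
    (hftconv : Tendsto
      (fun n => dTL2' (Measure.map (Fs n) (μs n)) (Measure.map F μ) (fts n) ft)
      atTop (nhds 0)) :
    Tendsto (fun n => dTL2 (μs n) μ (fun x => fts n (Fs n x)) (fun x => ft (F x)))
      atTop (nhds 0) := by
  have := Measure.isProbabilityMeasure_map (μ := μ) hFm.aemeasurable
  refine Metric.tendsto_nhds.2 fun ε hε => ?_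
  obtain ⟨g, hgc, hg, hfg⟩ :=
    hft.exists_hasCompactSupport_integral_dist_sq_le (show 0 < (ε / 7) ^ 2 by positivity)
  obtain ⟨K, hK, hosc⟩ := (hgc.uniformContinuous_of_continuous hg).exists_dist_sq_le
    (hgc.isCompact_range hg).isBounded (show 0 < ε / 7 by positivity)
  set η := (ε / 7) ^ 2 / (K + 1)
  -- so that the bound `10 η + 12 K η + 24 (ε / 7) ^ 2` of `dTL2_comp_le_of_dTL2_lt`
  -- is at most `(6 ε / 7) ^ 2`
  have hηK : η * (K + 1) = (ε / 7) ^ 2 := div_mul_cancel₀ _ (by positivity)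
  have hη : 0 < Real.sqrt η := Real.sqrt_pos.2 (by positivity)
  filter_upwards [hFconv.eventually (gt_mem_nhds hη), hftconv.eventually (gt_mem_nhds hη)]
    with n hFn hfn
  have := hprob n
  have hn := dTL2_comp_le_of_dTL2_lt
    ((memLp_two_iff_integrable_sq_norm aestronglyMeasurable_id).2 (h2s n))
    ((memLp_two_iff_integrable_sq_norm aestronglyMeasurable_id).2 h2) (hFsm n) hFm (hFs n) hF
    (hfts n) hft hg hgc hK hosc hfg hFn hfn
  rw [Real.dist_eq, sub_zero, abs_of_nonneg dTL2_nonneg]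
  calc _ ≤ _ := hn
    _ ≤ Real.sqrt ((6 * (ε / 7)) ^ 2) := Real.sqrt_le_sqrt (by nlinarith)
    _ < ε := by rw [Real.sqrt_sq (by positivity)]; linarith
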